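/- arXiv:2310.13509 — 2 statements merged into one kernel-verified Lean document; each statement's English description precedes it below -/
import Mathlib

section
/- If p is a rational prime and K a number field such that for some positive integer f the number of distinct prime ideals of the ring of integers of K lying above p with residue degree f exceeds the number of monic irreducible polynomials of degree f in 𝔽_p[x], then p divides the index of every algebraic integer θ generating K, i.e., p divides (Z_K : ℤ[θ]) for every primitive integer θ of K. -/
open NumberField Polynomial

/-- The index `(Z_K : ℤ[θ])` of the additive subgroup `ℤ[θ]` in the ring of integers. -/
noncomputable def indexZtheta {K : Type*} [Field K] [NumberField K] (θ : 𝓞 K) : ℕ :=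
  (Subalgebra.toSubmodule (Algebra.adjoin ℤ {θ})).toAddSubgroup.index

/-- `θ` is a primitive integer of `K`, i.e. `K = ℚ(θ)`. -/
def IsPrimitiveInt {K : Type*} [Field K] [NumberField K] (θ : 𝓞 K) : Prop :=
  Algebra.adjoin ℚ {(θ : K)} = ⊤

/-- The number of distinct prime ideals of `Z_K` lying above `p` with residue degree `f`. -/
noncomputable def primeCount (K : Type*) [Field K] [NumberField K] (p f : ℕ) : ℕ :=
  Nat.card {P : Ideal (𝓞 K) // P.IsPrime ∧
    Ideal.comap (algebraMap ℤ (𝓞 K)) P = Ideal.span {(p : ℤ)} ∧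
    Ideal.inertiaDeg' (Ideal.span {(p : ℤ)}) P = f}

/-- The number of monic irreducible polynomials of degree `f` over `𝔽_p`. -/
noncomputable def irredCount (p f : ℕ) : ℕ :=
  Nat.card {g : Polynomial (ZMod p) // g.Monic ∧ Irreducible g ∧ g.natDegree = f}

/-!
If `p ∤ (Z_K : ℤ[θ])`, then multiplication by `p` is bijective on the finite group `Z_K / ℤ[θ]`,
so `Z_K = ℤ[θ] + p Z_K`: every element of `Z_K` is a polynomial in `θ` modulo `p`. Hence for each
prime `P ∣ p` the residue field `Z_K / P` is generated over `𝔽_p` by `θ mod P`, whose minimal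
polynomial `g_P` is then monic irreducible of degree `f(P | p)`, and `P = (p, G(θ))` for every
integral lift `G` of `g_P`. So `P ↦ g_P` is injective, and there are at most as many primes of
residue degree `f` above `p` as monic irreducible polynomials of degree `f` over `𝔽_p`.
-/

theorem AddSubgroup.exists_sub_nsmul_mem_of_coprime_index {M : Type*} [AddCommGroup M]
    {A : AddSubgroup M} {n : ℕ} (h : A.index.Coprime n) (a : M) : ∃ b, a - n • b ∈ A := by
  obtain ⟨c, hc : n • c = (a : M ⧸ A)⟩ := (Nat.Coprime.nsmul_right_bijective h).2 (a : M ⧸ A)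
  obtain ⟨b, rfl⟩ := QuotientAddGroup.mk_surjective c
  refine ⟨b, ?_⟩
  rw [← QuotientAddGroup.eq_zero_iff, QuotientAddGroup.mk_sub, QuotientAddGroup.mk_nsmul, hc,
    sub_self]

theorem Polynomial.finite_setOf_natDegree_le (F : Type*) [CommRing F] [Finite F] (n : ℕ) :
    {g : F[X] | g.natDegree ≤ n}.Finite := by
  have : Finite (degreeLT F (n + 1)) := .of_equiv _ (degreeLTEquiv F (n + 1)).toEquiv.symm
  refine (Set.finite_coe_iff.mp this).subset fun g hg => mem_degreeLT.2 ?_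
  exact degree_le_natDegree.trans_lt (by exact_mod_cast Nat.lt_succ_of_le hg)

theorem natCard_eq_pow_natDegree_minpoly {F L : Type*} [Field F] [Field L] [Algebra F L]
    [Finite L] {x : L} (hx : Algebra.adjoin F {x} = ⊤) :
    Nat.card L = Nat.card F ^ (minpoly F x).natDegree := by
  have : Finite F := .of_injective _ (algebraMap F L).injective
  have : Module.Finite F L := .of_finite
  have hx' : IntermediateField.adjoin F {x} = ⊤ := by
    rwa [← IntermediateField.toSubalgebra_inj, IntermediateField.top_toSubalgebra,
      IntermediateField.adjoin_simple_toSubalgebra_of_isAlgebraic (.of_finite F x)]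
  rw [Module.natCard_eq_pow_finrank (K := F),
    (Field.primitive_element_iff_minpoly_natDegree_eq F x).1 hx']

section CommRing

variable {R : Type*} [CommRing R] {p : ℕ}

theorem exists_sub_aeval_mem_span_of_coprime_index {θ : R}
    (h : (Subalgebra.toSubmodule (Algebra.adjoin ℤ {θ})).toAddSubgroup.index.Coprime p)
    (a : R) : ∃ H : ℤ[X], a - aeval θ H ∈ Ideal.span {(p : R)} := by
  obtain ⟨b, hb⟩ := AddSubgroup.exists_sub_nsmul_mem_of_coprime_index h a
  obtain ⟨H, hH : aeval θ H = a - p • b⟩ :=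
    (Algebra.adjoin_singleton_eq_range_aeval ℤ θ ▸ hb : a - p • b ∈ (aeval θ).range)
  refine ⟨H, ?_⟩
  rw [hH, sub_sub_cancel, nsmul_eq_mul]
  exact Ideal.mul_mem_right _ _ (Ideal.mem_span_singleton_self _)

theorem aeval_mem_span_of_map_eq_zero (θ : R) {D : ℤ[X]}
    (hD : D.map (Int.castRingHom (ZMod p)) = 0) : aeval θ D ∈ Ideal.span {(p : R)} := by
  have : D ∈ Ideal.span {C (p : ℤ)} := by
    rw [← Set.image_singleton, ← Ideal.map_span, ← ZMod.ker_intCastRingHom, ← ker_mapRingHom]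
    exact hD
  obtain ⟨E, rfl⟩ := Ideal.mem_span_singleton'.1 this
  simp [Ideal.mem_span_singleton']

variable {S : Type*} [CommRing S] [Algebra (ZMod p) S] (φ : R →+* S)

theorem map_aeval_eq_aeval_map_intCast (θ : R) (H : ℤ[X]) :
    φ (aeval θ H) = aeval (φ θ) (H.map (Int.castRingHom (ZMod p))) :=
  map_aeval_eq_aeval_map (RingHom.ext_int _ _) H θ

theorem map_eq_zero_of_mem_span_natCast {x : R} (hx : x ∈ Ideal.span {(p : R)}) : φ x = 0 := by
  obtain ⟨c, rfl⟩ := Ideal.mem_span_singleton'.1 hx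
  rw [map_mul, map_natCast, ← map_natCast (algebraMap (ZMod p) S), ZMod.natCast_self, map_zero,
    mul_zero]

variable {θ : R} (hgen : ∀ a : R, ∃ H : ℤ[X], a - aeval θ H ∈ Ideal.span {(p : R)})
include hgen

theorem adjoin_map_eq_top (hφ : Function.Surjective φ) :
    Algebra.adjoin (ZMod p) {φ θ} = ⊤ := by
  rw [Algebra.adjoin_singleton_eq_range_aeval, eq_top_iff]
  rintro _ -
  obtain ⟨a, rfl⟩ := hφ ‹S›
  obtain ⟨H, hH⟩ := hgen a
  refine ⟨H.map (Int.castRingHom (ZMod p)), ?_⟩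
  change aeval (φ θ) _ = φ a
  rw [← map_aeval_eq_aeval_map_intCast, ← sub_eq_zero, ← map_sub,
    map_eq_zero_of_mem_span_natCast φ (neg_sub a _ ▸ neg_mem hH)]

theorem ker_eq_span_sup_span_aeval [Fact p.Prime] {G : ℤ[X]}
    (hG : G.map (Int.castRingHom (ZMod p)) = minpoly (ZMod p) (φ θ)) :
    RingHom.ker φ = Ideal.span {(p : R)} ⊔ Ideal.span {aeval θ G} := by
  refine le_antisymm (fun a ha => ?_) (sup_le ?_ ?_)
  · obtain ⟨H, hH⟩ := hgen a
    have hHθ : aeval (φ θ) (H.map (Int.castRingHom (ZMod p))) = 0 := by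
      rw [← map_aeval_eq_aeval_map_intCast, ← sub_sub_cancel a (aeval θ H), map_sub, ha,
        map_eq_zero_of_mem_span_natCast φ hH, sub_zero]
    obtain ⟨q, hq⟩ := minpoly.dvd (ZMod p) (φ θ) hHθ
    obtain ⟨Q, rfl⟩ := map_surjective (Int.castRingHom (ZMod p)) ZMod.intCast_surjective q
    have hHGQ : aeval θ (H - G * Q) ∈ Ideal.span {(p : R)} := aeval_mem_span_of_map_eq_zero θ
      (by rw [Polynomial.map_sub, Polynomial.map_mul, hG, hq, sub_self])
    have : a = (a - aeval θ H) + aeval θ (H - G * Q) + aeval θ G * aeval θ Q := by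
      simp only [map_sub, map_mul]; ring
    rw [this]
    exact add_mem (add_mem (Ideal.mem_sup_left hH) (Ideal.mem_sup_left hHGQ))
      (Ideal.mem_sup_right (Ideal.mul_mem_right _ _ (Ideal.mem_span_singleton_self _)))
  · exact (Ideal.span_singleton_le_iff_mem _).2
      (map_eq_zero_of_mem_span_natCast φ (Ideal.mem_span_singleton_self _))
  · rw [Ideal.span_singleton_le_iff_mem, RingHom.mem_ker,
      map_aeval_eq_aeval_map_intCast (p := p), hG]
    exact minpoly.aeval _ _

end CommRing

theorem Ideal.exists_minpoly_of_isMaximal {R : Type*} [CommRing R] {p : ℕ} [Fact p.Prime]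
    {θ : R} (hgen : ∀ a : R, ∃ H : ℤ[X], a - aeval θ H ∈ Ideal.span {(p : R)})
    (P : Ideal R) [P.IsMaximal] [Finite (R ⧸ P)] (hpP : (p : R) ∈ P) :
    ∃ g : (ZMod p)[X], g.Monic ∧ Irreducible g ∧ Nat.card (R ⧸ P) = p ^ g.natDegree ∧
      ∀ G : ℤ[X], G.map (Int.castRingHom (ZMod p)) = g →
        P = Ideal.span {(p : R)} ⊔ Ideal.span {aeval θ G} := by
  let := Ideal.Quotient.field P
  have : CharP (R ⧸ P) p := by
    rw [CharP.charP_iff_prime_eq_zero Fact.out, ← map_natCast (Ideal.Quotient.mk P),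
      Ideal.Quotient.eq_zero_iff_mem]
    exact hpP
  let := ZMod.algebra (R ⧸ P) p
  have hint : IsIntegral (ZMod p) (Ideal.Quotient.mk P θ) := .of_finite _ _
  have hadj := adjoin_map_eq_top _ hgen (Ideal.Quotient.mk_surjective (I := P))
  refine ⟨_, minpoly.monic hint, minpoly.irreducible hint, ?_, fun G hG => ?_⟩
  · rw [natCard_eq_pow_natDegree_minpoly hadj, Nat.card_zmod]
  · rw [← ker_eq_span_sup_span_aeval _ hgen hG, Ideal.mk_ker]

section NumberField

variable {K : Type*} [Field K] [NumberField K] {p : ℕ}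

theorem natCard_quotient_eq_pow_inertiaDeg' (hp : p.Prime) (P : Ideal (𝓞 K))
    [P.LiesOver (Ideal.span {(p : ℤ)})] :
    Nat.card (𝓞 K ⧸ P) = p ^ Ideal.inertiaDeg' (Ideal.span {(p : ℤ)}) P := by
  rw [← Ideal.absNorm_eq_pow_inertiaDeg' P hp, Ideal.absNorm_apply, Submodule.cardQuot_apply]

theorem exists_minpoly_of_liesOver [Fact p.Prime] {θ : 𝓞 K}
    (hgen : ∀ a : 𝓞 K, ∃ H : ℤ[X], a - aeval θ H ∈ Ideal.span {(p : 𝓞 K)})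
    (P : Ideal (𝓞 K)) [P.IsPrime] [P.LiesOver (Ideal.span {(p : ℤ)})] :
    ∃ g : (ZMod p)[X],
      (g.Monic ∧ Irreducible g ∧ g.natDegree = Ideal.inertiaDeg' (Ideal.span {(p : ℤ)}) P) ∧
      ∀ G : ℤ[X], G.map (Int.castRingHom (ZMod p)) = g →
        P = Ideal.span {(p : 𝓞 K)} ⊔ Ideal.span {aeval θ G} := by
  have hp : p.Prime := Fact.out
  have hcard := natCard_quotient_eq_pow_inertiaDeg' hp P
  have := Nat.finite_of_card_ne_zero (hcard ▸ pow_ne_zero _ hp.ne_zero)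
  have : P.IsMaximal := Ideal.IsPrime.isMaximal ‹_›
    (Ideal.ne_bot_of_liesOver_of_ne_bot (p := Ideal.span {(p : ℤ)}) (by simp [hp.ne_zero]) P)
  have hpP : (p : 𝓞 K) ∈ P := by
    simpa using (Ideal.mem_of_liesOver P _ (p : ℤ)).1 (Ideal.mem_span_singleton_self _)
  obtain ⟨g, hmonic, hirr, hdeg, hG⟩ := P.exists_minpoly_of_isMaximal hgen hpP
  exact ⟨g, ⟨hmonic, hirr, Nat.pow_right_injective hp.two_le (hdeg.symm.trans hcard)⟩, hG⟩

theorem primeCount_le_irredCount (hp : p.Prime) (f : ℕ) {θ : 𝓞 K}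
    (hgen : ∀ a : 𝓞 K, ∃ H : ℤ[X], a - aeval θ H ∈ Ideal.span {(p : 𝓞 K)}) :
    primeCount K p f ≤ irredCount p f := by
  have : Fact p.Prime := ⟨hp⟩
  have key (P : {P : Ideal (𝓞 K) // P.IsPrime ∧
      Ideal.comap (algebraMap ℤ (𝓞 K)) P = Ideal.span {(p : ℤ)} ∧
      Ideal.inertiaDeg' (Ideal.span {(p : ℤ)}) P = f}) :
      ∃ g : (ZMod p)[X], (g.Monic ∧ Irreducible g ∧ g.natDegree = f) ∧
        ∀ G : ℤ[X], G.map (Int.castRingHom (ZMod p)) = g →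
          P.1 = Ideal.span {(p : 𝓞 K)} ⊔ Ideal.span {aeval θ G} := by
    obtain ⟨P, hprime, hover, rfl⟩ := P
    have : P.LiesOver (Ideal.span {(p : ℤ)}) := ⟨hover.symm⟩
    exact exists_minpoly_of_liesOver hgen P
  choose g hg hgP using key
  have : Finite {g : (ZMod p)[X] // g.Monic ∧ Irreducible g ∧ g.natDegree = f} :=
    ((finite_setOf_natDegree_le (ZMod p) f).subset
      (t := {g | g.Monic ∧ Irreducible g ∧ g.natDegree = f}) fun g hg => hg.2.2.le).to_subtype
  refine Nat.card_le_card_of_injective (fun P => ⟨g P, hg P⟩) fun P Q hPQ => Subtype.ext ?_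
  obtain ⟨G, hG⟩ := map_surjective (Int.castRingHom (ZMod p)) ZMod.intCast_surjective (g P)
  rw [hgP P G hG, hgP Q G (hG.trans (congrArg Subtype.val hPQ))]

end NumberField

theorem prime_common_index_divisor_general {K : Type*} [Field K] [NumberField K]
    (p : ℕ) (hp : p.Prime) (f : ℕ)
    (h : irredCount p f < primeCount K p f) :
    ∀ θ : 𝓞 K, IsPrimitiveInt θ → p ∣ indexZtheta θ := by
  intro θ _
  by_contra hnd
  have hcoprime : (indexZtheta θ).Coprime p := Nat.coprime_comm.1 (hp.coprime_iff_not_dvd.2 hnd)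
  exact h.not_ge
    (primeCount_le_irredCount hp f (exists_sub_aeval_mem_span_of_coprime_index hcoprime))

/-- If for some `f ≥ 1` the number of primes above `p` of residue degree `f` exceeds the
number of monic irreducible polynomials of degree `f` over `𝔽_p`, then `p` divides the
index of every primitive integer of `K`. -/
theorem prime_common_index_divisor {K : Type*} [Field K] [NumberField K]
    (p : ℕ) (hp : p.Prime) (f : ℕ) (hf : 0 < f)
    (h : irredCount p f < primeCount K p f) :
    ∀ θ : 𝓞 K, IsPrimitiveInt θ → p ∣ indexZtheta θ :=
  prime_common_index_divisor_general p hp f h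
end

section
/- Let K be a number field defined by a monic irreducible trinomial F(x) = x^9 + a·x^2 + b ∈ ℤ[x] with 7 ∤ b. Then 7 does not divide the index i(K). -/
/-!
Take `θ = α`. The index `(𝓞 K : ℤ[α])` divides a power of `d = N(F'(α)) = ± disc F`, so it
suffices that `7 ∤ d`. Since `α F'(α) = -7aα² - 9b` and `7 ∤ 9b`, the integer `7` is a unit in
`𝓞 K / (F'(α))`, a ring of cardinality `|d|`; hence `7 ∤ d`.
-/

open NumberField Polynomial

theorem Polynomial.X_mul_derivative_X_pow {R : Type*} [CommSemiring R] (k : ℕ) :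
    X * derivative (X ^ k : R[X]) = C (k : R) * X ^ k := by
  cases k with
  | zero => simp
  | succ k => rw [derivative_X_pow_succ, pow_succ, Nat.cast_succ]; ring

theorem Polynomial.X_mul_derivative_trinomial {R : Type*} [CommRing R] (n m : ℕ) (a b : R) :
    X * derivative (X ^ n + C a * X ^ m + C b) =
      C (n : R) * (X ^ n + C a * X ^ m + C b) + C ((m - n) * a) * X ^ m - C (n * b) := by
  rw [derivative_add, derivative_add, derivative_C_mul, derivative_C, add_zero, mul_add,
    mul_left_comm, X_mul_derivative_X_pow, X_mul_derivative_X_pow]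
  simp only [C_mul, C_sub]
  ring

theorem mul_aeval_derivative_trinomial {A : Type*} [CommRing A] (n m : ℕ) (a b : ℤ) {x : A}
    (hx : aeval x (X ^ n + C a * X ^ m + C b : ℤ[X]) = 0) :
    x * aeval x (derivative (X ^ n + C a * X ^ m + C b : ℤ[X])) =
      (m - n : ℤ) * a * x ^ m - n * b := by
  calc x * aeval x (derivative (X ^ n + C a * X ^ m + C b))
      = aeval x (X * derivative (X ^ n + C a * X ^ m + C b)) := by rw [map_mul, aeval_X]
    _ = (m - n : ℤ) * a * x ^ m - n * b := by
      rw [X_mul_derivative_trinomial, map_sub, map_add, map_mul (aeval x) (C _), hx]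
      simp

theorem Ideal.Quotient.isUnit_intCast_of_sub_mul_mem {R : Type*} [CommRing R] {J : Ideal R}
    {n m : ℤ} (hnm : IsCoprime n m) {y : R} (hy : (m : R) - n * y ∈ J) :
    IsUnit (n : R ⧸ J) := by
  obtain ⟨u, v, huv⟩ := hnm
  have hm : (m : R ⧸ J) - n * Ideal.Quotient.mk J y = 0 := by
    simpa using Ideal.Quotient.eq_zero_iff_mem.mpr hy
  have huv' : (u : R ⧸ J) * n + v * m = 1 := by exact_mod_cast congrArg (Int.cast : ℤ → R ⧸ J) huv
  exact .of_mul_eq_one (u + v * Ideal.Quotient.mk J y) (by linear_combination huv' - v * hm)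

section DedekindFreeOverInt

variable {S : Type*} [CommRing S] [IsDedekindDomain S] [Module.Free ℤ S] [Module.Finite ℤ S]

theorem Algebra.not_dvd_norm_int_of_isUnit_quotient {β : S} (hβ : β ≠ 0) {p : ℕ} [Fact p.Prime]
    (h : IsUnit (p : S ⧸ Ideal.span {β})) : ¬ (p : ℤ) ∣ Algebra.norm ℤ β := by
  have : Finite (S ⧸ Ideal.span {β}) :=
    (Ideal.absNorm_ne_zero_iff _).mp (by simpa [Ideal.absNorm_eq_zero_iff] using hβ)
  have := Fintype.ofFinite (S ⧸ Ideal.span {β})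
  rw [Int.natCast_dvd, ← Ideal.absNorm_span_singleton, Ideal.absNorm_apply,
    Submodule.cardQuot_apply, Nat.card_eq_fintype_card]
  exact fun hp => not_isUnit_prime_of_dvd_card hp h

theorem AddSubgroup.index_dvd_natAbs_pow_of_forall_mul_mem {A : AddSubgroup S} {d : ℤ}
    (h : ∀ z : S, (d : S) * z ∈ A) : A.index ∣ d.natAbs ^ Module.finrank ℤ S := by
  have hle : (Ideal.span {(d : S)}).toAddSubgroup ≤ A := by
    intro x hx
    obtain ⟨z, rfl⟩ := Ideal.mem_span_singleton'.mp hx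
    simpa [mul_comm] using h z
  calc A.index ∣ (Ideal.span {(d : S)}).toAddSubgroup.index := AddSubgroup.index_dvd_of_le hle
    _ = Ideal.absNorm (Ideal.span {(d : S)}) := rfl
    _ = d.natAbs ^ Module.finrank ℤ S := by
      rw [Ideal.absNorm_span_singleton, ← eq_intCast (algebraMap ℤ S), Algebra.norm_algebraMap,
        Int.natAbs_pow]

end DedekindFreeOverInt

namespace NumberField.RingOfIntegers

theorem coe_mem_adjoin_int_iff {K : Type*} [Field K] {θ x : 𝓞 K} :
    (x : K) ∈ Algebra.adjoin ℤ {(θ : K)} ↔ x ∈ Algebra.adjoin ℤ {θ} := by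
  have h := AlgHom.map_adjoin_singleton (IsScalarTower.toAlgHom ℤ (𝓞 K) K) θ
  rw [IsScalarTower.coe_toAlgHom'] at h
  rw [← h]
  exact ⟨fun ⟨y, hy, hyx⟩ => coe_injective hyx ▸ hy, fun hx => ⟨x, hx, rfl⟩⟩

variable {K : Type*} [Field K] [NumberField K]

theorem coe_aeval_derivative_minpoly (θ : 𝓞 K) :
    (aeval θ (derivative (minpoly ℤ θ)) : K) = aeval (θ : K) (derivative (minpoly ℚ (θ : K))) := by
  rw [minpoly.isIntegrallyClosed_eq_field_fractions' ℚ θ.isIntegral_coe, derivative_map,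
    aeval_map_algebraMap, minpoly_coe]
  exact (aeval_algebraMap_apply K θ _).symm

theorem aeval_derivative_minpoly_ne_zero (θ : 𝓞 K) : aeval θ (derivative (minpoly ℤ θ)) ≠ 0 := by
  refine coe_ne_zero_iff.mp ?_
  rw [show algebraMap (𝓞 K) K _ = _ from coe_aeval_derivative_minpoly θ]
  exact (Algebra.IsSeparable.isSeparable ℚ (θ : K)).aeval_derivative_ne_zero (minpoly.aeval ℚ _)

/-- `N(f'(θ))` is the discriminant of `ℤ[θ]` up to sign, and the discriminant of a power basis
multiplies every integer into the order it generates. -/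
theorem norm_aeval_derivative_minpoly_mul_mem_adjoin {θ : 𝓞 K}
    (hθ : Algebra.adjoin ℚ {(θ : K)} = ⊤) (z : 𝓞 K) :
    (Algebra.norm ℤ (aeval θ (derivative (minpoly ℤ θ))) : 𝓞 K) * z ∈ Algebra.adjoin ℤ {θ} := by
  let B : PowerBasis ℚ K := (Algebra.adjoin.powerBasis (IsIntegral.of_finite ℚ (θ : K))).map
    ((Subalgebra.equivOfEq _ _ hθ).trans Subalgebra.topEquiv)
  have hgen : B.gen = θ := rfl
  have hdiscr : Algebra.discr ℚ B.basis • (z : K) ∈ Algebra.adjoin ℤ {B.gen} :=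
    Algebra.discr_mul_isIntegral_mem_adjoin ℚ (B := B) (hgen ▸ θ.isIntegral_coe) z.isIntegral_coe
  rw [Algebra.discr_powerBasis_eq_norm, hgen, ← coe_aeval_derivative_minpoly,
    ← Algebra.coe_norm_int] at hdiscr
  set k := Module.finrank ℚ K * (Module.finrank ℚ K - 1) / 2
  set N := Algebra.norm ℤ (aeval θ (derivative (minpoly ℤ θ)))
  have hsigned : (((-1) ^ k * N : ℤ) : 𝓞 K) * z ∈ Algebra.adjoin ℤ {θ} := by
    rw [← coe_mem_adjoin_int_iff]
    convert hdiscr using 1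
    rw [Algebra.smul_def]
    simp
  have hsign : ((-1) ^ k * (-1) ^ k : 𝓞 K) = 1 := by rw [← mul_pow, neg_one_mul, neg_neg, one_pow]
  convert Subalgebra.mul_mem _ (Subalgebra.intCast_mem _ ((-1) ^ k)) hsigned using 1
  push_cast
  linear_combination (-(N : 𝓞 K) * z) * hsign

theorem prime_dvd_norm_of_dvd_indexZtheta {θ : 𝓞 K} (hθ : Algebra.adjoin ℚ {(θ : K)} = ⊤)
    {p : ℕ} (hp : p.Prime) (h : p ∣ indexZtheta θ) :
    (p : ℤ) ∣ Algebra.norm ℤ (aeval θ (derivative (minpoly ℤ θ))) := by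
  have hindex : indexZtheta θ ∣ _ :=
    AddSubgroup.index_dvd_natAbs_pow_of_forall_mul_mem
      (A := (Subalgebra.toSubmodule (Algebra.adjoin ℤ {θ})).toAddSubgroup)
      (norm_aeval_derivative_minpoly_mul_mem_adjoin hθ)
  exact Int.natCast_dvd.mpr (hp.dvd_of_dvd_pow (h.trans hindex))

end NumberField.RingOfIntegers

open NumberField.RingOfIntegers in
/-- If `K` is defined by an irreducible trinomial `x^9 + a x^2 + b` with `7 ∤ b`,
then `7` does not divide the index `i(K)`. -/
theorem seven_not_dvd_index {K : Type*} [Field K] [NumberField K] (a b : ℤ)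
    (hirr : Irreducible (X ^ 9 + C a * X ^ 2 + C b : Polynomial ℤ))
    (α : 𝓞 K) (hroot : Polynomial.aeval α (X ^ 9 + C a * X ^ 2 + C b : Polynomial ℤ) = 0)
    (hgen : Algebra.adjoin ℚ {(α : K)} = ⊤)
    (hb : ¬ (7 : ℤ) ∣ b) :
    ∃ θ : 𝓞 K, IsPrimitiveInt θ ∧ ¬ 7 ∣ indexZtheta θ := by
  refine ⟨α, hgen, fun h7 => ?_⟩
  have hint : IsIntegral ℤ α := α.isIntegral
  have hmin : minpoly ℤ α = X ^ 9 + C a * X ^ 2 + C b :=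
    eq_of_monic_of_associated (minpoly.monic hint) (by monicity!)
      ((minpoly.irreducible hint).associated_of_dvd hirr (minpoly.isIntegrallyClosed_dvd hint hroot))
  have hαβ := mul_aeval_derivative_trinomial 9 2 a b hroot
  rw [← hmin] at hαβ
  have hunit : IsUnit ((7 : ℕ) : 𝓞 K ⧸ Ideal.span {aeval α (derivative (minpoly ℤ α))}) := by
    have hcop : IsCoprime (7 : ℤ) (-9 * b) :=
      (by norm_num : Prime (7 : ℤ)).irreducible.coprime_iff_not_dvd.mpr (by omega)
    have hmem : ((-9 * b : ℤ) : 𝓞 K) - (7 : ℤ) * ((a : 𝓞 K) * α ^ 2) ∈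
        Ideal.span {aeval α (derivative (minpoly ℤ α))} := by
      convert Ideal.mul_mem_left _ α (Ideal.mem_span_singleton_self _) using 1
      rw [hαβ]
      push_cast
      ring
    exact_mod_cast Ideal.Quotient.isUnit_intCast_of_sub_mul_mem hcop hmem
  have : Fact (Nat.Prime 7) := ⟨Nat.prime_seven⟩
  exact Algebra.not_dvd_norm_int_of_isUnit_quotient (aeval_derivative_minpoly_ne_zero α) hunit
    (prime_dvd_norm_of_dvd_indexZtheta hgen Nat.prime_seven h7)
end
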